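/- arXiv:1509.07922 — 2 statements merged into one kernel-verified Lean document; each statement's English description precedes it below -/
import Mathlib

section
/- Let λ > 0, η > 0, and suppose Ψ*, Ψ_l : Ω → ℝ satisfy Ψ_l ≤ Ψ*, Ψ* − Ψ_l ≤ ε pointwise, Ψ* ≥ η pointwise, Ψ_l > 0 pointwise, and ε < η. Then for all x ∈ Ω, 0 ≤ −λ log Ψ_l(x) + λ log Ψ*(x) ≤ −λ log(1 − ε/η). -/
open Real

/-- Suboptimality bound on the approximate value function: if `Ψ_l ≤ Ψ*`,
`Ψ* − Ψ_l ≤ ε`, `Ψ* ≥ η`, `Ψ_l > 0`, `ε < η`, then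
`0 ≤ −λ log Ψ_l + λ log Ψ* ≤ −λ log(1 − ε/η)`. -/
theorem value_suboptimality_bound (n : ℕ) (Ω : Set (Fin n → ℝ))
    (lam η ε : ℝ) (hlam : 0 < lam) (hη : 0 < η) (hε : ε < η)
    (Ψs Ψl : (Fin n → ℝ) → ℝ)
    (h1 : ∀ x ∈ Ω, Ψl x ≤ Ψs x)
    (h2 : ∀ x ∈ Ω, Ψs x - Ψl x ≤ ε)
    (h3 : ∀ x ∈ Ω, η ≤ Ψs x)
    (h4 : ∀ x ∈ Ω, 0 < Ψl x) :
    ∀ x ∈ Ω, 0 ≤ -lam * Real.log (Ψl x) + lam * Real.log (Ψs x) ∧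
      -lam * Real.log (Ψl x) + lam * Real.log (Ψs x) ≤ -lam * Real.log (1 - ε / η) := by
  intro x hx
  have ha : 0 < Ψl x := h4 x hx
  have hab : Ψl x ≤ Ψs x := h1 x hx
  have hεb : Ψs x - Ψl x ≤ ε := h2 x hx
  have hηb : η ≤ Ψs x := h3 x hx
  have hε0 : 0 ≤ ε := le_trans (by linarith) hεb
  have hεη : 0 ≤ ε / η := div_nonneg hε0 hη.le
  have hfrac : 0 < 1 - ε / η := by
    have : ε / η < 1 := (div_lt_one hη).mpr hε
    linarith
  have hb : 0 < Ψs x := lt_of_lt_of_le hη hηb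
  constructor
  · have := Real.log_le_log ha hab
    nlinarith
  · have h1' : ε ≤ Ψs x * (ε / η) := by
      have h2' : ε = η * (ε / η) := by field_simp
      nlinarith
    have hkey : Ψs x * (1 - ε / η) ≤ Ψl x := by nlinarith
    have hpos : 0 < Ψs x * (1 - ε / η) := mul_pos hb hfrac
    have hlog : Real.log (Ψs x * (1 - ε / η)) ≤ Real.log (Ψl x) :=
      Real.log_le_log hpos hkey
    rw [Real.log_mul (ne_of_gt hb) (ne_of_gt hfrac)] at hlog
    nlinarith
end

section
/- Let f : ℝⁿ → ℝⁿ, G : ℝⁿ → ℝ^{n×m}, B : ℝⁿ → ℝ^{n×l}, Σ_ε ∈ ℝ^{l×l}, R ∈ ℝ^{m×m} positive definite, λ > 0, and suppose λ G(x) R⁻¹ G(x)ᵀ = B(x) Σ_ε B(x)ᵀ =: Σ(x) for all x. Let Ψ : ℝⁿ → ℝ be C² and positive, V = −λ log Ψ, and u = −R⁻¹ Gᵀ ∇V. Then the generator L(V) := (∇V)ᵀ(f + G u) + ½ Tr((∇²V) B Σ_ε Bᵀ) equals −(λ/Ψ)(∇Ψ)ᵀ f − (λ/(2Ψ²)) (∇Ψ)ᵀ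 Σ ∇Ψ − (λ/(2Ψ)) Tr((∇²Ψ) Σ). -/
open Real Matrix

/-- Gradient of a scalar function on `ℝⁿ`. -/
noncomputable def grad (n : ℕ) (V : (Fin n → ℝ) → ℝ) (x : Fin n → ℝ) : Fin n → ℝ :=
  fun i => fderiv ℝ V x (Pi.single i 1)

/-- Hessian matrix of a scalar function on `ℝⁿ`. -/
noncomputable def hess (n : ℕ) (V : (Fin n → ℝ) → ℝ) (x : Fin n → ℝ) :
    Matrix (Fin n) (Fin n) ℝ :=
  Matrix.of fun i j => fderiv ℝ (fun y => fderiv ℝ V y (Pi.single j 1)) x (Pi.single i 1)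

/-!
With `φ t = -λ log t` we have `V = φ ∘ Ψ`, so the chain rule gives `∇V = -(λ/Ψ) ∇Ψ` and
`∇²V = (λ/Ψ²) ∇Ψ ∇Ψᵀ - (λ/Ψ) ∇²Ψ`. The structural assumption turns the optimal drift `G u` into
`Ψ⁻¹ Σ ∇Ψ`, so the control term contributes `-(λ/Ψ²) ∇Ψᵀ Σ ∇Ψ`, of which the diffusion term
gives back half.
-/

theorem grad_comp {n : ℕ} {φ : ℝ → ℝ} {Ψ : (Fin n → ℝ) → ℝ} {x : Fin n → ℝ}
    (hφ : DifferentiableAt ℝ φ (Ψ x)) (hΨ : DifferentiableAt ℝ Ψ x) :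
    grad n (φ ∘ Ψ) x = deriv φ (Ψ x) • grad n Ψ x := by
  ext i
  simp [grad, fderiv_comp x hφ hΨ, mul_comm]

theorem grad_mul {n : ℕ} {g h : (Fin n → ℝ) → ℝ} {x : Fin n → ℝ}
    (hg : DifferentiableAt ℝ g x) (hh : DifferentiableAt ℝ h x) :
    grad n (fun y => g y * h y) x = g x • grad n h x + h x • grad n g x := by
  ext i
  simp [grad, fderiv_fun_mul hg hh]

theorem hess_apply (n : ℕ) (V : (Fin n → ℝ) → ℝ) (x : Fin n → ℝ) (i j : Fin n) :
    hess n V x i j = grad n (fun y => grad n V y j) x i :=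
  rfl

theorem differentiable_grad_apply {n : ℕ} {Ψ : (Fin n → ℝ) → ℝ} (hΨ : ContDiff ℝ 2 Ψ)
    (j : Fin n) : Differentiable ℝ (fun y => grad n Ψ y j) :=
  ((hΨ.fderiv_right (m := 1) (by norm_num)).differentiable one_ne_zero).clm_apply
    (differentiable_const _)

theorem hess_comp {n : ℕ} {φ : ℝ → ℝ} {Ψ : (Fin n → ℝ) → ℝ} {x : Fin n → ℝ}
    (hφ : ∀ y, DifferentiableAt ℝ φ (Ψ y)) (hφ' : DifferentiableAt ℝ (deriv φ) (Ψ x))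
    (hΨ : Differentiable ℝ Ψ) (hgradΨ : ∀ j, DifferentiableAt ℝ (fun y => grad n Ψ y j) x) :
    hess n (φ ∘ Ψ) x = deriv (deriv φ) (Ψ x) • vecMulVec (grad n Ψ x) (grad n Ψ x)
      + deriv φ (Ψ x) • hess n Ψ x := by
  ext i j
  have hgrad : (fun y => grad n (φ ∘ Ψ) y j) = fun y => (deriv φ ∘ Ψ) y * grad n Ψ y j :=
    funext fun y => by rw [grad_comp (hφ y) (hΨ y)]; rfl
  rw [hess_apply, hgrad, grad_mul (hφ'.comp x (hΨ x)) (hgradΨ j), grad_comp hφ' (hΨ x)]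
  simp only [Function.comp_apply, Pi.add_apply, Pi.smul_apply, smul_eq_mul, Matrix.add_apply,
    Matrix.smul_apply, vecMulVec_apply, hess_apply]
  ring

theorem deriv_const_mul_log (c : ℝ) : deriv (fun t => c * Real.log t) = fun t => c * t⁻¹ := by
  rw [deriv_const_mul_field', Real.deriv_log']

theorem deriv_deriv_const_mul_log (c t : ℝ) :
    deriv (deriv fun t => c * Real.log t) t = -c * (t ^ 2)⁻¹ := by
  rw [deriv_const_mul_log, deriv_const_mul_field, deriv_inv]
  ring

theorem trace_vecMulVec_mul {n R : Type*} [Fintype n] [CommSemiring R] (v : n → R)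
    (S : Matrix n n R) :
    (vecMulVec v v * S).trace = v ⬝ᵥ S *ᵥ v := by
  rw [vecMulVec_mul, trace_vecMulVec, dotProduct_comm, dotProduct_mulVec]

theorem generator_in_terms_of_desirability_general (n m l : ℕ) (lam : ℝ)
    (f : (Fin n → ℝ) → (Fin n → ℝ))
    (G : (Fin n → ℝ) → Matrix (Fin n) (Fin m) ℝ)
    (B : (Fin n → ℝ) → Matrix (Fin n) (Fin l) ℝ)
    (Sige : Matrix (Fin l) (Fin l) ℝ)
    (R : Matrix (Fin m) (Fin m) ℝ)
    (Sig : (Fin n → ℝ) → Matrix (Fin n) (Fin n) ℝ)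
    (hstruct : ∀ x, lam • (G x * R⁻¹ * (G x)ᵀ) = Sig x)
    (hSig : ∀ x, B x * Sige * (B x)ᵀ = Sig x)
    (Ψ : (Fin n → ℝ) → ℝ) (hΨ : ContDiff ℝ 2 Ψ) (hΨpos : ∀ x, 0 < Ψ x)
    (V : (Fin n → ℝ) → ℝ) (hV : ∀ x, V x = -lam * Real.log (Ψ x))
    (u : (Fin n → ℝ) → (Fin m → ℝ))
    (hu : ∀ x, u x = -((R⁻¹ * (G x)ᵀ).mulVec (grad n V x)))
    (L : (Fin n → ℝ) → ℝ)
    (hL : ∀ x, L x = dotProduct (grad n V x) (f x + (G x).mulVec (u x))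
        + (1 / 2) * (hess n V x * (B x * Sige * (B x)ᵀ)).trace) :
    ∀ x, L x = -(lam / Ψ x) * dotProduct (grad n Ψ x) (f x)
        - (lam / (2 * (Ψ x) ^ 2)) * dotProduct (grad n Ψ x) ((Sig x).mulVec (grad n Ψ x))
        - (lam / (2 * Ψ x)) * (hess n Ψ x * Sig x).trace := by
  intro x
  have hVcomp : V = (fun t => -lam * Real.log t) ∘ Ψ := funext hV
  have hΨd : Differentiable ℝ Ψ := hΨ.differentiable (by norm_num)
  have hlog (y : Fin n → ℝ) : DifferentiableAt ℝ (fun t => -lam * Real.log t) (Ψ y) :=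
    (Real.differentiableAt_log (hΨpos y).ne').const_mul _
  have hlog' : DifferentiableAt ℝ (deriv fun t => -lam * Real.log t) (Ψ x) := by
    rw [deriv_const_mul_log]
    exact (differentiableAt_inv (hΨpos x).ne').const_mul _
  have hgradV : grad n V x = (-lam * (Ψ x)⁻¹) • grad n Ψ x := by
    rw [hVcomp, grad_comp (hlog x) (hΨd x), deriv_const_mul_log]
  have hhessV : hess n V x = (lam * (Ψ x ^ 2)⁻¹) • vecMulVec (grad n Ψ x) (grad n Ψ x)
      + (-lam * (Ψ x)⁻¹) • hess n Ψ x := by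
    rw [hVcomp, hess_comp hlog hlog' hΨd (fun j => differentiable_grad_apply hΨ j x),
      deriv_deriv_const_mul_log, deriv_const_mul_log, neg_neg]
  have hGu : G x *ᵥ u x = (Ψ x)⁻¹ • Sig x *ᵥ grad n Ψ x := by
    rw [hu x, hgradV, ← hstruct x, mulVec_neg, mulVec_mulVec, ← Matrix.mul_assoc, mulVec_smul,
      smul_mulVec, smul_smul, ← neg_smul, neg_mul, neg_neg, mul_comm]
  rw [hL x, hSig x, hgradV, hhessV, hGu, add_mul, trace_add, smul_mul, smul_mul, trace_smul,
    trace_smul, trace_vecMulVec_mul]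
  simp only [dotProduct_add, smul_dotProduct, dotProduct_smul, smul_eq_mul]
  field_simp
  ring

/-- Under the structural noise assumption `λ G R⁻¹ Gᵀ = B Σ_ε Bᵀ = Σ`, with
`V = −λ log Ψ` and `u = −R⁻¹ Gᵀ ∇V`, the generator
`L(V) = (∇V)ᵀ(f + Gu) + ½ Tr((∇²V) B Σ_ε Bᵀ)` equals
`−(λ/Ψ)(∇Ψ)ᵀ f − (λ/(2Ψ²))(∇Ψ)ᵀ Σ ∇Ψ − (λ/(2Ψ)) Tr((∇²Ψ) Σ)`. -/
theorem generator_in_terms_of_desirability (n m l : ℕ) (lam : ℝ) (hlam : 0 < lam)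
    (f : (Fin n → ℝ) → (Fin n → ℝ))
    (G : (Fin n → ℝ) → Matrix (Fin n) (Fin m) ℝ)
    (B : (Fin n → ℝ) → Matrix (Fin n) (Fin l) ℝ)
    (Sige : Matrix (Fin l) (Fin l) ℝ)
    (R : Matrix (Fin m) (Fin m) ℝ) (hR : R.PosDef)
    (Sig : (Fin n → ℝ) → Matrix (Fin n) (Fin n) ℝ)
    (hstruct : ∀ x, lam • (G x * R⁻¹ * (G x)ᵀ) = Sig x)
    (hSig : ∀ x, B x * Sige * (B x)ᵀ = Sig x)
    (Ψ : (Fin n → ℝ) → ℝ) (hΨ : ContDiff ℝ 2 Ψ) (hΨpos : ∀ x, 0 < Ψ x)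
    (V : (Fin n → ℝ) → ℝ) (hV : ∀ x, V x = -lam * Real.log (Ψ x))
    (u : (Fin n → ℝ) → (Fin m → ℝ))
    (hu : ∀ x, u x = -((R⁻¹ * (G x)ᵀ).mulVec (grad n V x)))
    (L : (Fin n → ℝ) → ℝ)
    (hL : ∀ x, L x = dotProduct (grad n V x) (f x + (G x).mulVec (u x))
        + (1 / 2) * (hess n V x * (B x * Sige * (B x)ᵀ)).trace) :
    ∀ x, L x = -(lam / Ψ x) * dotProduct (grad n Ψ x) (f x)
        - (lam / (2 * (Ψ x) ^ 2)) * dotProduct (grad n Ψ x) ((Sig x).mulVec (grad n Ψ x))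
        - (lam / (2 * Ψ x)) * (hess n Ψ x * Sig x).trace :=
  generator_in_terms_of_desirability_general n m l lam f G B Sige R Sig hstruct hSig Ψ hΨ hΨpos V hV
    u hu L hL
end
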